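/- arXiv:1110.6696 — 3 statements merged into one kernel-verified Lean document; each statement's English description precedes it below -/
import Mathlib

section
/- For every fixed r > 1, the integral ∫_{−∞}^{∞} A(−ω + iy, r)² dy tends to 0 as ω → ∞; moreover ∫_{−∞}^{∞} A(−ω + iy, 1)³ dy tends to 0 as ω → ∞. -/
open MeasureTheory Filter

/-- `A z r = (∑_{k=0}^∞ 1/|z - k²|^r)^{1/r}`. -/
noncomputable def A (z : ℂ) (r : ℝ) : ℝ :=
  (∑' k : ℕ, 1 / ‖z - (k : ℂ) ^ 2‖ ^ r) ^ (1 / r)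

/-!
Write `z = -ω + iy`, so that `|z - k²|² = (ω + k²)² + y²`. By monotonicity of `ℓʳ` norms we may
replace `r` by `r₀ = min r 2`; both integrals are then `‖∑ₖ fₖ‖ₚᵖ` for `fₖ(y) = |z - k²|^{-s}`, with
`(s, p) = (r₀, 2 / r₀)` and `(1, 3)` respectively, so `p ≥ 1`. Minkowski's inequality bounds
`‖∑ₖ fₖ‖ₚ` by `∑ₖ ‖fₖ‖ₚ`, and the substitution `y = (ω + k²) u` gives
`‖fₖ‖ₚ = C (ω + k²)^{1/p - s}`. As `s - 1/p > 1/2`, dominated convergence shows that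
`∑ₖ (ω + k²)^{1/p - s} → 0` as `ω → ∞`.
-/

open scoped ENNReal Topology

theorem ENNReal.tsum_rpow_one_div_le {ι : Type*} (f : ι → ℝ≥0∞) {p q : ℝ} (hp : 0 < p)
    (hpq : p ≤ q) : (∑' i, f i ^ q) ^ (1 / q) ≤ (∑' i, f i ^ p) ^ (1 / p) := by
  set T := ∑' i, f i ^ p
  have hq : 0 < q := hp.trans_le hpq
  have hterm (i : ι) : f i ^ q ≤ f i ^ p * T ^ ((q - p) / p) := by
    have hfi : f i ≤ T ^ (1 / p) := by
      simpa [one_div, ENNReal.rpow_rpow_inv hp.ne'] using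
        ENNReal.rpow_le_rpow (ENNReal.le_tsum (f := fun i => f i ^ p) i) (one_div_nonneg.2 hp.le)
    calc f i ^ q = f i ^ p * f i ^ (q - p) := by
          rw [← ENNReal.rpow_add_of_nonneg _ _ hp.le (sub_nonneg.2 hpq), add_sub_cancel]
      _ ≤ f i ^ p * T ^ ((q - p) / p) := by
          gcongr
          calc f i ^ (q - p) ≤ (T ^ (1 / p)) ^ (q - p) :=
                ENNReal.rpow_le_rpow hfi (sub_nonneg.2 hpq)
            _ = T ^ ((q - p) / p) := by rw [← ENNReal.rpow_mul, one_div_mul_eq_div]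
  have hsum : ∑' i, f i ^ q ≤ T ^ (q / p) :=
    calc ∑' i, f i ^ q ≤ ∑' i, f i ^ p * T ^ ((q - p) / p) := ENNReal.tsum_le_tsum hterm
      _ = T ^ (1 + (q - p) / p) := by
          rw [ENNReal.tsum_mul_right, ENNReal.rpow_add_of_nonneg _ _ zero_le_one
            (div_nonneg (sub_nonneg.2 hpq) hp.le), ENNReal.rpow_one]
      _ = T ^ (q / p) := by congr 1; field_simp; ring
  calc (∑' i, f i ^ q) ^ (1 / q) ≤ (T ^ (q / p)) ^ (1 / q) :=
        ENNReal.rpow_le_rpow hsum (one_div_nonneg.2 hq.le)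
    _ = T ^ (1 / p) := by rw [← ENNReal.rpow_mul]; congr 1; field_simp

theorem ENNReal.ofReal_tsum_le {ι : Type*} {f : ι → ℝ} (hf : ∀ i, 0 ≤ f i) :
    ENNReal.ofReal (∑' i, f i) ≤ ∑' i, ENNReal.ofReal (f i) := by
  by_cases hsum : Summable f
  · exact (ENNReal.ofReal_tsum_of_nonneg hf hsum).le
  · simp [tsum_eq_zero_of_not_summable hsum]

theorem eLpNorm'_tsum_le {α : Type*} [MeasurableSpace α] {μ : Measure α} {f : ℕ → α → ℝ≥0∞}
    (hf : ∀ k, AEMeasurable (f k) μ) {p : ℝ} (hp : 1 ≤ p) :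
    eLpNorm' (fun x => ∑' k, f k x) p μ ≤ ∑' k, eLpNorm' (f k) p μ := by
  have hp0 : 0 < p := zero_lt_one.trans_le hp
  have hpartial : Tendsto (fun N => eLpNorm' (∑ k ∈ Finset.range N, f k) p μ) atTop
      (𝓝 (eLpNorm' (fun x => ∑' k, f k x) p μ)) := by
    simp only [eLpNorm'_eq_lintegral_enorm, enorm_eq_self, Finset.sum_apply]
    refine (ENNReal.continuous_rpow_const.tendsto _).comp
      (lintegral_tendsto_of_tendsto_of_monotone (fun N => ?_) ?_ ?_)
    · exact (Finset.aemeasurable_fun_sum _ fun k _ => hf k).pow_const _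
    · exact ae_of_all _ fun x M N hMN => ENNReal.rpow_le_rpow
        (Finset.sum_le_sum_of_subset (Finset.range_subset_range.2 hMN)) hp0.le
    · exact ae_of_all _ fun x =>
        (ENNReal.continuous_rpow_const.tendsto _).comp (ENNReal.tendsto_nat_tsum _)
  refine le_of_tendsto' hpartial fun N => ?_
  calc eLpNorm' (∑ k ∈ Finset.range N, f k) p μ ≤ ∑ k ∈ Finset.range N, eLpNorm' (f k) p μ :=
        eLpNorm'_sum_le (fun k _ => (hf k).aestronglyMeasurable) hp
    _ ≤ ∑' k, eLpNorm' (f k) p μ := ENNReal.sum_le_tsum _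

theorem tendsto_integral_of_ofReal_le_lintegral {ι α : Type*} [MeasurableSpace α] {μ : Measure α}
    {l : Filter ι} {F : ι → α → ℝ} {G : ι → α → ℝ≥0∞} (hF : ∀ i x, 0 ≤ F i x)
    (hFG : ∀ i x, ENNReal.ofReal (F i x) ≤ G i x)
    (hG : Tendsto (fun i => ∫⁻ x, G i x ∂μ) l (𝓝 0)) :
    Tendsto (fun i => ∫ x, F i x ∂μ) l (𝓝 0) := by
  have hle (i : ι) : ENNReal.ofReal (∫ x, F i x ∂μ) ≤ ∫⁻ x, G i x ∂μ :=
    calc ENNReal.ofReal (∫ x, F i x ∂μ) = ‖∫ x, F i x ∂μ‖ₑ :=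
          (Real.enorm_of_nonneg (integral_nonneg (hF i))).symm
      _ ≤ ∫⁻ x, ‖F i x‖ₑ ∂μ := enorm_integral_le_lintegral_enorm _
      _ ≤ ∫⁻ x, G i x ∂μ :=
          lintegral_mono fun x => (Real.enorm_of_nonneg (hF i x)).trans_le (hFG i x)
  have h := (ENNReal.tendsto_toReal ENNReal.zero_ne_top).comp <|
    tendsto_of_tendsto_of_tendsto_of_le_of_le tendsto_const_nhds hG (fun _ => zero_le) hle
  simpa [Function.comp_def, ENNReal.toReal_ofReal (integral_nonneg (hF _))] using h

theorem integrable_one_add_sq_rpow {t : ℝ} (ht : 1 < t) :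
    Integrable fun u : ℝ => (1 + u ^ 2) ^ (-t / 2) := by
  simpa using integrable_rpow_neg_one_add_norm_sq (E := ℝ) (μ := volume) (by simpa using ht)

theorem lintegral_ofReal_sq_add_sq_rpow {a t : ℝ} (ha : 0 < a) (ht : 1 < t) :
    ∫⁻ y : ℝ, ENNReal.ofReal ((a ^ 2 + y ^ 2) ^ (-t / 2)) =
      ENNReal.ofReal a ^ (1 - t) * ∫⁻ u : ℝ, ENNReal.ofReal ((1 + u ^ 2) ^ (-t / 2)) := by
  have hg := integrable_one_add_sq_rpow ht
  have hscale (y : ℝ) : (a ^ 2 + y ^ 2) ^ (-t / 2) = a ^ (-t) * (1 + (y / a) ^ 2) ^ (-t / 2) := by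
    rw [show a ^ 2 + y ^ 2 = a ^ 2 * (1 + (y / a) ^ 2) by field_simp,
      Real.mul_rpow (by positivity) (by positivity), ← Real.rpow_natCast, ← Real.rpow_mul ha.le]
    congr 2
    ring
  have hf : Integrable fun y : ℝ => (a ^ 2 + y ^ 2) ^ (-t / 2) :=
    ((hg.comp_div ha.ne').const_mul (a ^ (-t))).congr (ae_of_all _ fun y => (hscale y).symm)
  rw [← ofReal_integral_eq_lintegral_ofReal hf (ae_of_all _ fun y => by positivity),
    ← ofReal_integral_eq_lintegral_ofReal hg (ae_of_all _ fun y => by positivity),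
    ENNReal.ofReal_rpow_of_pos ha, ← ENNReal.ofReal_mul (by positivity)]
  congr 1
  simp_rw [hscale]
  rw [integral_const_mul, Measure.integral_comp_div (fun u => (1 + u ^ 2) ^ (-t / 2)),
    abs_of_pos ha, smul_eq_mul, ← mul_assoc, sub_eq_add_neg, Real.rpow_add ha, Real.rpow_one,
    mul_comm a]

theorem summable_one_add_sq_rpow_neg {c : ℝ} (hc : 1 / 2 < c) :
    Summable fun k : ℕ => (1 + (k : ℝ) ^ 2) ^ (-c) := by
  refine (summable_nat_add_iff 1).mp <| Summable.of_nonneg_of_le (fun k => by positivity)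
    (fun k => ?_)
    ((summable_nat_add_iff 1).mpr (Real.summable_nat_rpow.mpr (by linarith : -(2 * c) < -1)))
  have hk : (0 : ℝ) < ((k + 1 : ℕ) : ℝ) := by positivity
  calc (1 + ((k + 1 : ℕ) : ℝ) ^ 2) ^ (-c) ≤ (((k + 1 : ℕ) : ℝ) ^ 2) ^ (-c) :=
        Real.rpow_le_rpow_of_nonpos (by positivity) (by linarith) (by linarith)
    _ = ((k + 1 : ℕ) : ℝ) ^ (-(2 * c)) := by
        rw [← Real.rpow_natCast, ← Real.rpow_mul hk.le]; norm_num

theorem tendsto_tsum_ofReal_add_sq_rpow_neg {c : ℝ} (hc : 1 / 2 < c) :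
    Tendsto (fun ω : ℝ => ∑' k : ℕ, ENNReal.ofReal (ω + (k : ℝ) ^ 2) ^ (-c)) atTop (𝓝 0) := by
  have hc0 : 0 < c := by linarith
  have hdom : ∑' k : ℕ, ENNReal.ofReal (1 + (k : ℝ) ^ 2) ^ (-c) ≠ ∞ := by
    rw [tsum_congr fun k => ENNReal.ofReal_rpow_of_pos (by positivity),
      ← ENNReal.ofReal_tsum_of_nonneg (fun k => by positivity)
      (summable_one_add_sq_rpow_neg hc)]
    exact ENNReal.ofReal_ne_top
  have hlim (k : ℕ) :
      Tendsto (fun ω : ℝ => ENNReal.ofReal (ω + (k : ℝ) ^ 2) ^ (-c)) atTop (𝓝 0) := by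
    have h := ((ENNReal.continuous_rpow_const (y := -c)).tendsto ⊤).comp <|
      ENNReal.tendsto_ofReal_atTop.comp (tendsto_atTop_add_const_right _ ((k : ℝ) ^ 2) tendsto_id)
    rwa [ENNReal.top_rpow_of_neg (neg_lt_zero.2 hc0)] at h
  simpa [lintegral_count] using tendsto_lintegral_filter_of_dominated_convergence
    (μ := Measure.count) (fun k : ℕ => ENNReal.ofReal (1 + (k : ℝ) ^ 2) ^ (-c))
    (Eventually.of_forall fun ω => measurable_of_countable _)
    ((eventually_ge_atTop 1).mono fun ω hω => ae_of_all _ fun k => by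
      rw [ENNReal.rpow_neg, ENNReal.rpow_neg]; gcongr)
    (by rwa [lintegral_count]) (ae_of_all _ hlim)

theorem Complex.enorm_inv_rpow {w : ℂ} (hw : w ≠ 0) (t : ℝ) :
    ‖w‖ₑ⁻¹ ^ t = ENNReal.ofReal ((w.re ^ 2 + w.im ^ 2) ^ (-t / 2)) := by
  have hw' : 0 < ‖w‖ := norm_pos_iff.2 hw
  have hsq : w.re ^ 2 + w.im ^ 2 = ‖w‖ ^ 2 := by rw [Complex.sq_norm, Complex.normSq_apply]; ring
  rw [← ofReal_norm, ← ENNReal.ofReal_inv_of_pos hw', ENNReal.ofReal_rpow_of_pos (inv_pos.2 hw'),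
    hsq, ← Real.rpow_natCast, ← Real.rpow_mul (norm_nonneg _), Real.inv_rpow (norm_nonneg _),
    ← Real.rpow_neg (norm_nonneg _)]
  ring_nf

theorem enorm_sub_natCast_sq_inv_rpow {ω : ℝ} (hω : 0 < ω) (y : ℝ) (k : ℕ) (t : ℝ) :
    ‖((-ω : ℝ) : ℂ) + (y : ℝ) * Complex.I - (k : ℂ) ^ 2‖ₑ⁻¹ ^ t =
      ENNReal.ofReal (((ω + (k : ℝ) ^ 2) ^ 2 + y ^ 2) ^ (-t / 2)) := by
  set w := ((-ω : ℝ) : ℂ) + (y : ℝ) * Complex.I - (k : ℂ) ^ 2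
  have hre : w.re = -(ω + (k : ℝ) ^ 2) := by simp [w, sq]; ring
  have him : w.im = y := by simp [w, sq]
  have hw : w ≠ 0 := fun h => by
    have : w.re = 0 := by rw [h, Complex.zero_re]
    rw [hre] at this
    linarith [sq_nonneg (k : ℝ)]
  rw [Complex.enorm_inv_rpow hw, hre, him, neg_sq]

theorem tendsto_lintegral_tsum_enorm_inv_rpow {s p : ℝ} (hp : 1 ≤ p) (hsp : 1 < s * p)
    (hc : 1 / 2 < s - 1 / p) :
    Tendsto (fun ω : ℝ => ∫⁻ y : ℝ,
      (∑' k : ℕ, ‖((-ω : ℝ) : ℂ) + (y : ℝ) * Complex.I - (k : ℂ) ^ 2‖ₑ⁻¹ ^ s) ^ p)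
      atTop (𝓝 0) := by
  have hp0 : 0 < p := by linarith
  set C := ∫⁻ u : ℝ, ENNReal.ofReal ((1 + u ^ 2) ^ (-(s * p) / 2))
  have hC : C ^ (1 / p) ≠ ∞ := ENNReal.rpow_ne_top_of_nonneg (by positivity)
    (integrable_one_add_sq_rpow hsp).lintegral_lt_top.ne
  have hterm {ω : ℝ} (hω : 0 < ω) (k : ℕ) :
      eLpNorm' (fun y : ℝ => ‖((-ω : ℝ) : ℂ) + (y : ℝ) * Complex.I - (k : ℂ) ^ 2‖ₑ⁻¹ ^ s) p volume
        = C ^ (1 / p) * ENNReal.ofReal (ω + (k : ℝ) ^ 2) ^ (-(s - 1 / p)) := by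
    simp_rw [eLpNorm'_eq_lintegral_enorm, enorm_eq_self, ← ENNReal.rpow_mul,
      enorm_sub_natCast_sq_inv_rpow hω]
    rw [lintegral_ofReal_sq_add_sq_rpow (by positivity) hsp,
      ENNReal.mul_rpow_of_nonneg _ _ (by positivity), ← ENNReal.rpow_mul, mul_comm]
    congr 2
    field_simp
    ring
  have hnorm : Tendsto (fun ω : ℝ => eLpNorm' (fun y : ℝ =>
      ∑' k : ℕ, ‖((-ω : ℝ) : ℂ) + (y : ℝ) * Complex.I - (k : ℂ) ^ 2‖ₑ⁻¹ ^ s) p volume)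
      atTop (𝓝 0) := by
    have hbound := ENNReal.Tendsto.const_mul (tendsto_tsum_ofReal_add_sq_rpow_neg hc) (Or.inr hC)
    rw [mul_zero] at hbound
    refine tendsto_of_tendsto_of_tendsto_of_le_of_le' tendsto_const_nhds hbound
      (Eventually.of_forall fun _ => zero_le) ?_
    filter_upwards [eventually_gt_atTop 0] with ω hω
    calc _ ≤ _ := eLpNorm'_tsum_le (fun k => by fun_prop) hp
      _ = _ := by simp_rw [hterm hω]; rw [ENNReal.tsum_mul_left]
  have h := ((ENNReal.continuous_rpow_const (y := p)).tendsto 0).comp hnorm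
  simp_rw [Function.comp_def, eLpNorm'_eq_lintegral_enorm, enorm_eq_self, one_div,
    ENNReal.rpow_inv_rpow hp0.ne', ENNReal.zero_rpow_of_pos hp0] at h
  exact h

theorem A_nonneg (z : ℂ) (r : ℝ) : 0 ≤ A z r :=
  Real.rpow_nonneg (tsum_nonneg fun _ => by positivity) _

theorem ofReal_A_le (z : ℂ) {r : ℝ} (hr : 0 < r) :
    ENNReal.ofReal (A z r) ≤ (∑' k : ℕ, ‖z - (k : ℂ) ^ 2‖ₑ⁻¹ ^ r) ^ (1 / r) := by
  rw [A, ← ENNReal.ofReal_rpow_of_nonneg (tsum_nonneg fun _ => by positivity) (by positivity)]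
  gcongr
  refine (ENNReal.ofReal_tsum_le fun _ => by positivity).trans (ENNReal.tsum_le_tsum fun k => ?_)
  rw [one_div, ← Real.inv_rpow (norm_nonneg _),
    ← ENNReal.ofReal_rpow_of_nonneg (inv_nonneg.2 (norm_nonneg _)) hr.le, ← ofReal_norm]
  gcongr
  exact ENNReal.ofReal_inv_le

theorem ofReal_A_pow_le (z : ℂ) {r₀ r : ℝ} (hr₀ : 0 < r₀) (hr : r₀ ≤ r) (n : ℕ) :
    ENNReal.ofReal (A z r ^ n) ≤ (∑' k : ℕ, ‖z - (k : ℂ) ^ 2‖ₑ⁻¹ ^ r₀) ^ (n / r₀) :=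
  calc ENNReal.ofReal (A z r ^ n) = ENNReal.ofReal (A z r) ^ n :=
        ENNReal.ofReal_pow (A_nonneg z r) n
    _ ≤ ((∑' k : ℕ, ‖z - (k : ℂ) ^ 2‖ₑ⁻¹ ^ r) ^ (1 / r)) ^ n := by
        gcongr; exact ofReal_A_le z (hr₀.trans_le hr)
    _ ≤ ((∑' k : ℕ, ‖z - (k : ℂ) ^ 2‖ₑ⁻¹ ^ r₀) ^ (1 / r₀)) ^ n := by
        gcongr; exact ENNReal.tsum_rpow_one_div_le _ hr₀ hr
    _ = (∑' k : ℕ, ‖z - (k : ℂ) ^ 2‖ₑ⁻¹ ^ r₀) ^ (n / r₀) := by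
        rw [← ENNReal.rpow_natCast, ← ENNReal.rpow_mul, one_div_mul_eq_div]

theorem stmt2 :
    (∀ r : ℝ, 1 < r →
      Tendsto (fun ω : ℝ => ∫ y : ℝ, A ((-ω : ℝ) + (y : ℝ) * Complex.I) r ^ 2)
        atTop (nhds 0)) ∧
    Tendsto (fun ω : ℝ => ∫ y : ℝ, A ((-ω : ℝ) + (y : ℝ) * Complex.I) 1 ^ 3)
      atTop (nhds 0) := by
  refine ⟨fun r hr => ?_, ?_⟩
  · set r₀ := min r 2
    have hr₀ : 1 < r₀ := lt_min hr one_lt_two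
    refine tendsto_integral_of_ofReal_le_lintegral (fun _ _ => pow_nonneg (A_nonneg _ _) 2)
      (fun _ _ => ofReal_A_pow_le _ (by positivity) (min_le_left r 2) 2)
      (tendsto_lintegral_tsum_enorm_inv_rpow (s := r₀) (p := 2 / r₀) ?_ ?_ ?_)
    · rw [le_div_iff₀ (by positivity), one_mul]; exact min_le_right r 2
    · rw [mul_div_cancel₀ _ (by positivity)]; norm_num
    · field_simp; linarith
  · exact tendsto_integral_of_ofReal_le_lintegral (fun _ _ => pow_nonneg (A_nonneg _ _) 3)
      (fun _ _ => ofReal_A_pow_le _ one_pos le_rfl 3)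
      (tendsto_lintegral_tsum_enorm_inv_rpow (s := 1) (p := 3 / 1) (by norm_num) (by norm_num)
        (by norm_num))
end

section
/- For every r > 1 there exist constants c = c(r) > 0 and C = C(r) > 0 such that for every integer N ≥ 2 and every y ∈ ℝ, writing λ = N² + N + iy: (i) if |y| ≤ N then c/N ≤ A(λ, r) ≤ C/N; (ii) if N ≤ |y| ≤ N² then c · N^{−1/r} · |y|^{−1 + 1/r} ≤ A(λ, r) ≤ C · N^{−1/r} · |y|^{−1 + 1/r}; (iii) if |y| ≥ N² then c · |y|^{−1 + 1/(2r)} ≤ A(λ, r) ≤ C · |y|^{−1 + 1/(2r)}. -/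
/-- The point `λ = N² + N + iy`. -/
noncomputable def lam (N : ℕ) (y : ℝ) : ℂ :=
  (((N : ℝ) ^ 2 + N : ℝ) : ℂ) + (y : ℝ) * Complex.I

/-!
Write `S = ∑ₖ ‖λ - k²‖^(-r)`, so that `A = S^(1/r)`. The real part `N² + N - k²` of `λ - k²` has
absolute value at least `N m` when `k` is the `m`-th integer on either side of `N + 1/2`, so
folding the sum there bounds `S` by twice `∑ₘ min(a, (N m)^(-r))`, where `a` bounds every term
(`a = N^(-r)`, or `a = |y|^(-r)`). Splitting at `m ≈ |y|/N` and comparing the tail with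
`∫ x^(-r)` gives the upper bounds in (i) and (ii). For `|y| ≥ N²` the `≈ 2√|y|` terms with
`k ≤ 2√|y|` are at most `|y|^(-r)` and the others at most `(k²/2)^(-r)`. The lower bounds count
the `k` with `‖λ - k²‖ ≲ max(N, |y|)`: `k = N` in (i), `N ≤ k < N + |y|/N` in (ii), `k ≤ √|y|`
in (iii).
-/

open Finset Complex

theorem rpow_neg_eq_sqrt_rpow {x : ℝ} (hx : 0 ≤ x) (r : ℝ) : x ^ (-r) = √x ^ (-(2 * r)) := by
  rw [Real.sqrt_eq_rpow, ← Real.rpow_mul hx]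
  ring_nf

section PSeriesTail

variable {s K : ℝ}

theorem sum_range_natCast_add_add_one_rpow_neg_le (hs : 1 < s) (hK : 0 < K) (n : ℕ) :
    ∑ j ∈ range n, ((j : ℝ) + K + 1) ^ (-s) ≤ K ^ (1 - s) / (s - 1) := by
  have hanti : AntitoneOn (fun x : ℝ => x ^ (-s)) (Set.Icc K (K + n)) := fun x hx y _ hxy =>
    Real.rpow_le_rpow_of_nonpos (hK.trans_le hx.1) hxy (by linarith)
  have hint : ∫ x in K..K + n, x ^ (-s) = (K ^ (1 - s) - (K + n) ^ (1 - s)) / (s - 1) := by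
    rw [integral_rpow (Or.inr ⟨by linarith, fun h => ?_⟩)]
    · rw [show -s + 1 = 1 - s by ring, ← neg_div_neg_eq, neg_sub, neg_sub]
    · exact (Set.mem_uIcc.1 h).elim (fun h => by linarith [h.1]) fun h => by
        linarith [h.2, (Nat.cast_nonneg n : (0 : ℝ) ≤ n)]
  calc ∑ j ∈ range n, ((j : ℝ) + K + 1) ^ (-s)
      = ∑ j ∈ range n, (K + ((j + 1 : ℕ) : ℝ)) ^ (-s) := by
        refine sum_congr rfl fun j _ => ?_
        push_cast
        ring_nf
    _ ≤ ∫ x in K..K + n, x ^ (-s) := hanti.sum_le_integral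
    _ ≤ K ^ (1 - s) / (s - 1) := by
        rw [hint]
        exact div_le_div_of_nonneg_right (sub_le_self _ (by positivity)) (by linarith)

theorem summable_natCast_add_add_one_rpow_neg (hs : 1 < s) (hK : 0 < K) :
    Summable fun j : ℕ => ((j : ℝ) + K + 1) ^ (-s) :=
  summable_of_sum_range_le (fun _ => by positivity)
    (sum_range_natCast_add_add_one_rpow_neg_le hs hK)

theorem tsum_natCast_add_add_one_rpow_neg_le (hs : 1 < s) (hK : 0 < K) :
    ∑' j : ℕ, ((j : ℝ) + K + 1) ^ (-s) ≤ K ^ (1 - s) / (s - 1) :=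
  Real.tsum_le_of_sum_range_le (fun _ => by positivity)
    (sum_range_natCast_add_add_one_rpow_neg_le hs hK)

end PSeriesTail

theorem tsum_le_of_head_le_of_tail_le {f b : ℕ → ℝ} {a : ℝ} (P : ℕ) (hf : ∀ k, 0 ≤ f k)
    (hhead : ∀ k < P, f k ≤ a) (htail : ∀ j, f (j + P) ≤ b j) (hb : Summable b) :
    ∑' k, f k ≤ P * a + ∑' j, b j := by
  have htail_summable : Summable fun j => f (j + P) := hb.of_nonneg_of_le (fun _ => hf _) htail
  rw [← ((summable_nat_add_iff P).1 htail_summable).sum_add_tsum_nat_add P]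
  gcongr ?_ + ?_
  · simpa using sum_le_card_nsmul (range P) f a fun k hk => hhead k (mem_range.1 hk)
  · exact htail_summable.tsum_le_tsum htail hb

theorem tsum_le_two_mul_tsum_of_reflect_le {u w : ℕ → ℝ} (N : ℕ) (hu : ∀ k, 0 ≤ u k)
    (hw : ∀ j, 0 ≤ w j) (hw_summable : Summable w) (hleft : ∀ k ≤ N, u k ≤ w (N - k))
    (hright : ∀ j, u (j + (N + 1)) ≤ w j) :
    ∑' k, u k ≤ 2 * ∑' j, w j := by
  have hright_summable : Summable fun j => u (j + (N + 1)) :=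
    hw_summable.of_nonneg_of_le (fun _ => hu _) hright
  rw [← ((summable_nat_add_iff (N + 1)).1 hright_summable).sum_add_tsum_nat_add (N + 1), two_mul]
  gcongr ?_ + ?_
  · calc ∑ k ∈ range (N + 1), u k ≤ ∑ k ∈ range (N + 1), w (N - k) :=
          sum_le_sum fun k hk => hleft k (Nat.lt_succ_iff.1 (mem_range.1 hk))
      _ = ∑ j ∈ range (N + 1), w j := by simpa using sum_range_reflect w (N + 1)
      _ ≤ ∑' j, w j := hw_summable.sum_le_tsum _ fun j _ => hw j
  · exact hright_summable.tsum_le_tsum hright hw_summable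

noncomputable def invDistPowSum (z : ℂ) (r : ℝ) : ℝ :=
  ∑' k : ℕ, ‖z - (k : ℂ) ^ 2‖ ^ (-r)

theorem A_eq_invDistPowSum_rpow (z : ℂ) (r : ℝ) : A z r = invDistPowSum z r ^ (1 / r) := by
  simp only [A, invDistPowSum, Real.rpow_neg (norm_nonneg _), one_div]

theorem A_bounds_of_invDistPowSum_bounds {z : ℂ} {r c C X X' : ℝ} (hr : 0 < r) (hc : 0 ≤ c)
    (hC : 0 ≤ C) (hX' : 0 ≤ X') (hX : X = X' ^ r)
    (h : c * X ≤ invDistPowSum z r ∧ invDistPowSum z r ≤ C * X) :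
    c ^ (1 / r) * X' ≤ A z r ∧ A z r ≤ C ^ (1 / r) * X' := by
  have hX'_eq : X' = X ^ (1 / r) := by rw [hX, one_div, Real.rpow_rpow_inv hX' hr.ne']
  have hX0 : 0 ≤ X := hX ▸ by positivity
  rw [A_eq_invDistPowSum_rpow, hX'_eq, ← Real.mul_rpow hc hX0, ← Real.mul_rpow hC hX0]
  exact ⟨Real.rpow_le_rpow (by positivity) h.1 (by positivity),
    Real.rpow_le_rpow ((mul_nonneg hc hX0).trans h.1) h.2 (by positivity)⟩

section DistanceToSquares

variable {z : ℂ} {k : ℕ} {r : ℝ}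

theorem sq_div_two_le_norm_sub_sq (h : 2 * |z.re| ≤ (k : ℝ) ^ 2) :
    (k : ℝ) ^ 2 / 2 ≤ ‖z - (k : ℂ) ^ 2‖ := by
  have hre := abs_re_le_norm (z - (k : ℂ) ^ 2)
  rw [show (z - (k : ℂ) ^ 2).re = z.re - (k : ℝ) ^ 2 by simp [pow_two]] at hre
  linarith [neg_le_abs (z.re - (k : ℝ) ^ 2), le_abs_self z.re]

theorem norm_sub_sq_rpow_neg_le (hr : 0 ≤ r) (hk : 0 < k) (h : 2 * |z.re| ≤ (k : ℝ) ^ 2) :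
    ‖z - (k : ℂ) ^ 2‖ ^ (-r) ≤ 2 ^ r * (k : ℝ) ^ (-(2 * r)) := by
  calc ‖z - (k : ℂ) ^ 2‖ ^ (-r) ≤ ((k : ℝ) ^ 2 / 2) ^ (-r) :=
        Real.rpow_le_rpow_of_nonpos (by positivity) (sq_div_two_le_norm_sub_sq h) (by linarith)
    _ = 2 ^ r * (k : ℝ) ^ (-(2 * r)) := by
        rw [Real.div_rpow (by positivity) zero_le_two, Real.rpow_neg zero_le_two, div_inv_eq_mul,
          mul_comm, ← Real.rpow_natCast, ← Real.rpow_mul (Nat.cast_nonneg k)]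
        push_cast
        ring_nf

theorem summable_norm_sub_sq_rpow_neg (z : ℂ) (hr : 1 / 2 < r) :
    Summable fun k : ℕ => ‖z - (k : ℂ) ^ 2‖ ^ (-r) := by
  obtain ⟨n, hn⟩ := exists_nat_ge (2 * |z.re|)
  refine ((Real.summable_nat_rpow.2 (by linarith : -(2 * r) < -1)).mul_left
    (2 ^ r)).of_norm_bounded_eventually_nat ?_
  filter_upwards [Filter.eventually_ge_atTop (max n 1)] with k hk
  have hk1 : (1 : ℝ) ≤ k := by exact_mod_cast (le_max_right _ _).trans hk
  have hkn : (n : ℝ) ≤ k := by exact_mod_cast (le_max_left _ _).trans hk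
  rw [Real.norm_of_nonneg (by positivity)]
  exact norm_sub_sq_rpow_neg_le (by linarith) (by omega) (by nlinarith)

theorem card_mul_rpow_neg_le_invDistPowSum {D : ℝ} (hr : 1 / 2 < r) (s : Finset ℕ)
    (hpos : ∀ k ∈ s, 0 < ‖z - (k : ℂ) ^ 2‖) (hD : ∀ k ∈ s, ‖z - (k : ℂ) ^ 2‖ ≤ D) :
    #s * D ^ (-r) ≤ invDistPowSum z r :=
  calc (#s : ℝ) * D ^ (-r) = ∑ k ∈ s, D ^ (-r) := by rw [sum_const, nsmul_eq_mul]
    _ ≤ ∑ k ∈ s, ‖z - (k : ℂ) ^ 2‖ ^ (-r) := sum_le_sum fun k hk =>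
        Real.rpow_le_rpow_of_nonpos (hpos k hk) (hD k hk) (by linarith)
    _ ≤ invDistPowSum z r :=
        (summable_norm_sub_sq_rpow_neg z hr).sum_le_tsum s fun k _ => by positivity

end DistanceToSquares

section Lam

variable {N k : ℕ} {y r : ℝ}

theorem lam_re (N : ℕ) (y : ℝ) : (lam N y).re = (N : ℝ) ^ 2 + N := by
  simp [lam, pow_two]

theorem lam_sub_sq_re (N k : ℕ) (y : ℝ) :
    (lam N y - (k : ℂ) ^ 2).re = (N : ℝ) ^ 2 + N - (k : ℝ) ^ 2 := by
  simp [lam, pow_two]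

theorem lam_sub_sq_im (N k : ℕ) (y : ℝ) : (lam N y - (k : ℂ) ^ 2).im = y := by
  simp [lam, pow_two]

theorem abs_re_le_norm_lam_sub_sq (N k : ℕ) (y : ℝ) :
    |(N : ℝ) ^ 2 + N - (k : ℝ) ^ 2| ≤ ‖lam N y - (k : ℂ) ^ 2‖ := by
  have h := abs_re_le_norm (lam N y - (k : ℂ) ^ 2)
  rwa [lam_sub_sq_re] at h

theorem abs_le_norm_lam_sub_sq (N k : ℕ) (y : ℝ) : |y| ≤ ‖lam N y - (k : ℂ) ^ 2‖ := by
  have h := abs_im_le_norm (lam N y - (k : ℂ) ^ 2)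
  rwa [lam_sub_sq_im] at h

theorem norm_lam_sub_sq_le (N k : ℕ) (y : ℝ) :
    ‖lam N y - (k : ℂ) ^ 2‖ ≤ |(N : ℝ) ^ 2 + N - (k : ℝ) ^ 2| + |y| := by
  have h := norm_le_abs_re_add_abs_im (lam N y - (k : ℂ) ^ 2)
  rwa [lam_sub_sq_re, lam_sub_sq_im] at h

theorem natCast_le_norm_lam_sub_sq (N k : ℕ) (y : ℝ) : (N : ℝ) ≤ ‖lam N y - (k : ℂ) ^ 2‖ := by
  refine le_trans ?_ (abs_re_le_norm_lam_sub_sq N k y)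
  rcases le_or_gt k N with hk | hk
  · have hk' : (k : ℝ) ≤ N := by exact_mod_cast hk
    rw [abs_of_nonneg (by nlinarith [Nat.cast_nonneg (α := ℝ) k])]
    nlinarith [Nat.cast_nonneg (α := ℝ) k]
  · have hk' : (N : ℝ) + 1 ≤ k := by exact_mod_cast hk
    rw [abs_of_neg (by nlinarith [Nat.cast_nonneg (α := ℝ) N])]
    nlinarith [Nat.cast_nonneg (α := ℝ) N]

theorem mul_sub_add_one_le_norm_lam_sub_sq (hk : k ≤ N) (y : ℝ) :
    (N : ℝ) * ((N - k : ℕ) + 1) ≤ ‖lam N y - (k : ℂ) ^ 2‖ := by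
  refine le_trans ?_ ((le_abs_self _).trans (abs_re_le_norm_lam_sub_sq N k y))
  have hk' : (k : ℝ) ≤ N := by exact_mod_cast hk
  rw [Nat.cast_sub hk]
  nlinarith [Nat.cast_nonneg (α := ℝ) k]

theorem mul_add_one_le_norm_lam_sub_sq (N j : ℕ) (y : ℝ) :
    (N : ℝ) * (j + 1) ≤ ‖lam N y - ((j + (N + 1) : ℕ) : ℂ) ^ 2‖ := by
  refine le_trans ?_ ((neg_le_abs _).trans (abs_re_le_norm_lam_sub_sq N _ y))
  push_cast
  nlinarith [Nat.cast_nonneg (α := ℝ) N, Nat.cast_nonneg (α := ℝ) j]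

theorem invDistPowSum_lam_le_of_forall_le (hr : 1 < r) (hN : 1 ≤ N) (y : ℝ) {a : ℝ}
    (ha : ∀ k : ℕ, ‖lam N y - (k : ℂ) ^ 2‖ ^ (-r) ≤ a) {P : ℕ} (hP : 1 ≤ P) :
    invDistPowSum (lam N y) r ≤ 2 * (P * a + (N : ℝ) ^ (-r) * ((P : ℝ) ^ (1 - r) / (r - 1))) := by
  have hN0 : (0 : ℝ) < N := by exact_mod_cast hN
  have hP0 : (0 : ℝ) < P := by exact_mod_cast hP
  set w : ℕ → ℝ := fun j => min a (((N : ℝ) * (j + 1)) ^ (-r))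
  have hw : ∀ j, 0 ≤ w j := fun j =>
    le_min ((by positivity : (0 : ℝ) ≤ _).trans (ha 0)) (by positivity)
  have hw_tail : ∀ j, w (j + P) ≤ (N : ℝ) ^ (-r) * ((j : ℝ) + P + 1) ^ (-r) := fun j =>
    (min_le_right _ _).trans_eq (by rw [Real.mul_rpow hN0.le (by positivity)]; push_cast; ring_nf)
  have hb := (summable_natCast_add_add_one_rpow_neg hr hP0).mul_left ((N : ℝ) ^ (-r))
  have hw_summable : Summable w :=
    (summable_nat_add_iff P).1 (hb.of_nonneg_of_le (fun _ => hw _) hw_tail)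
  have hw_tsum : ∑' j, w j ≤ P * a + (N : ℝ) ^ (-r) * ((P : ℝ) ^ (1 - r) / (r - 1)) := by
    refine (tsum_le_of_head_le_of_tail_le P hw (fun j _ => min_le_left _ _) hw_tail hb).trans ?_
    rw [tsum_mul_left]
    gcongr
    exact tsum_natCast_add_add_one_rpow_neg_le hr hP0
  refine (tsum_le_two_mul_tsum_of_reflect_le N (fun _ => by positivity) hw hw_summable
    (fun k hk => le_min (ha k) ?_) (fun j => le_min (ha _) ?_)).trans
    (mul_le_mul_of_nonneg_left hw_tsum zero_le_two)
  · exact Real.rpow_le_rpow_of_nonpos (by positivity) (mul_sub_add_one_le_norm_lam_sub_sq hk y)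
      (by linarith)
  · exact Real.rpow_le_rpow_of_nonpos (by positivity) (mul_add_one_le_norm_lam_sub_sq N j y)
      (by linarith)

end Lam

section Regimes

variable {N : ℕ} {y r : ℝ}

theorem le_invDistPowSum_lam_of_abs_le (hr : 1 < r) (hN : 1 ≤ N) (hy : |y| ≤ N) :
    (2 : ℝ) ^ (-r) * (N : ℝ) ^ (-r) ≤ invDistPowSum (lam N y) r := by
  have hN0 : (0 : ℝ) < N := by exact_mod_cast hN
  have hnorm : ‖lam N y - (N : ℂ) ^ 2‖ ≤ 2 * N := by
    refine (norm_lam_sub_sq_le N N y).trans ?_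
    rw [add_sub_cancel_left, abs_of_pos hN0]
    linarith
  have h := card_mul_rpow_neg_le_invDistPowSum (z := lam N y) (r := r) (D := 2 * N)
    (by linarith) {N}
    (fun k hk => by rw [mem_singleton.1 hk]; exact hN0.trans_le (natCast_le_norm_lam_sub_sq N N y))
    (fun k hk => by rw [mem_singleton.1 hk]; exact hnorm)
  rwa [card_singleton, Nat.cast_one, one_mul, Real.mul_rpow zero_le_two hN0.le] at h

theorem invDistPowSum_lam_le_natCast_rpow_neg (hr : 1 < r) (hN : 1 ≤ N) (y : ℝ) :
    invDistPowSum (lam N y) r ≤ 2 * (1 + 1 / (r - 1)) * (N : ℝ) ^ (-r) := by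
  have hN0 : (0 : ℝ) < N := by exact_mod_cast hN
  have ha (k : ℕ) : ‖lam N y - (k : ℂ) ^ 2‖ ^ (-r) ≤ (N : ℝ) ^ (-r) :=
    Real.rpow_le_rpow_of_nonpos hN0 (natCast_le_norm_lam_sub_sq N k y) (by linarith)
  refine (invDistPowSum_lam_le_of_forall_le hr hN y ha le_rfl).trans_eq ?_
  simp only [Nat.cast_one, Real.one_rpow]
  ring

theorem le_invDistPowSum_lam_of_le_abs_of_abs_le_sq (hr : 1 < r) (hN : 1 ≤ N)
    (h₁ : (N : ℝ) ≤ |y|) (h₂ : |y| ≤ (N : ℝ) ^ 2) :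
    (4 : ℝ) ^ (-r) / 2 * ((N : ℝ)⁻¹ * |y| ^ (1 - r)) ≤ invDistPowSum (lam N y) r := by
  have hN0 : (0 : ℝ) < N := by exact_mod_cast hN
  have hy0 : 0 < |y| := hN0.trans_le h₁
  set J := ⌊|y| / N⌋₊
  have hJ_le : (J : ℝ) * N ≤ |y| := (le_div_iff₀ hN0).1 (Nat.floor_le (by positivity))
  have hJ_half : |y| / N / 2 < J := Nat.div_two_lt_floor (by rw [le_div_iff₀ hN0]; linarith)
  have hnorm : ∀ k ∈ Ico N (N + J), ‖lam N y - (k : ℂ) ^ 2‖ ≤ 4 * |y| := by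
    intro k hk
    have hkl : (N : ℝ) ≤ k := by exact_mod_cast (mem_Ico.1 hk).1
    have hku : (k : ℝ) + 1 ≤ N + J := by exact_mod_cast (mem_Ico.1 hk).2
    have hJ_le_N : (J : ℝ) ≤ N := le_of_mul_le_mul_right (by nlinarith) hN0
    have hre : |(N : ℝ) ^ 2 + N - (k : ℝ) ^ 2| ≤ 3 * |y| :=
      abs_le.2 ⟨by nlinarith, by nlinarith⟩
    linarith [norm_lam_sub_sq_le N k y]
  have h := card_mul_rpow_neg_le_invDistPowSum (z := lam N y) (r := r) (D := 4 * |y|)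
    (by linarith) (Ico N (N + J)) (fun k _ => hN0.trans_le (natCast_le_norm_lam_sub_sq N k y))
    hnorm
  rw [Nat.card_Ico, Nat.add_sub_cancel_left, Real.mul_rpow (by norm_num) hy0.le] at h
  calc (4 : ℝ) ^ (-r) / 2 * ((N : ℝ)⁻¹ * |y| ^ (1 - r))
      = |y| / N / 2 * ((4 : ℝ) ^ (-r) * |y| ^ (-r)) := by
        rw [Real.rpow_one_sub' hy0.le (by linarith), Real.rpow_neg hy0.le]
        ring
    _ ≤ J * ((4 : ℝ) ^ (-r) * |y| ^ (-r)) := by gcongr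
    _ ≤ invDistPowSum (lam N y) r := h

theorem invDistPowSum_lam_le_of_le_abs (hr : 1 < r) (hN : 1 ≤ N) (h₁ : (N : ℝ) ≤ |y|) :
    invDistPowSum (lam N y) r ≤
      2 * (1 + 2 ^ (r - 1) / (r - 1)) * ((N : ℝ)⁻¹ * |y| ^ (1 - r)) := by
  have hN0 : (0 : ℝ) < N := by exact_mod_cast hN
  have hy0 : 0 < |y| := hN0.trans_le h₁
  set J := ⌊|y| / N⌋₊
  have hJ1 : 1 ≤ J := Nat.le_floor (by rw [Nat.cast_one, le_div_iff₀ hN0]; linarith)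
  have hJ_le : (J : ℝ) ≤ |y| / N := Nat.floor_le (by positivity)
  have hJ_half : |y| / N / 2 < J := Nat.div_two_lt_floor (by rw [le_div_iff₀ hN0]; linarith)
  have ha (k : ℕ) : ‖lam N y - (k : ℂ) ^ 2‖ ^ (-r) ≤ |y| ^ (-r) :=
    Real.rpow_le_rpow_of_nonpos hy0 (abs_le_norm_lam_sub_sq N k y) (by linarith)
  have hJ_pow : (J : ℝ) ^ (1 - r) ≤ (|y| / N / 2) ^ (1 - r) :=
    Real.rpow_le_rpow_of_nonpos (by positivity) hJ_half.le (by linarith)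
  calc invDistPowSum (lam N y) r
      ≤ 2 * (J * |y| ^ (-r) + (N : ℝ) ^ (-r) * ((J : ℝ) ^ (1 - r) / (r - 1))) :=
        invDistPowSum_lam_le_of_forall_le hr hN y ha hJ1
    _ ≤ 2 * (|y| / N * |y| ^ (-r) + (N : ℝ) ^ (-r) * ((|y| / N / 2) ^ (1 - r) / (r - 1))) := by
        gcongr
    _ = 2 * (1 + 2 ^ (r - 1) / (r - 1)) * ((N : ℝ)⁻¹ * |y| ^ (1 - r)) := by
        rw [div_div, Real.div_rpow hy0.le (by positivity), Real.mul_rpow hN0.le zero_le_two,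
          Real.rpow_one_sub' hy0.le (by linarith), Real.rpow_one_sub' hN0.le (by linarith),
          Real.rpow_one_sub' zero_le_two (by linarith), Real.rpow_sub_one two_pos.ne']
        simp only [Real.rpow_neg hN0.le, Real.rpow_neg hy0.le]
        field_simp

theorem le_invDistPowSum_lam_of_sq_le_abs (hr : 1 < r) (hN : 1 ≤ N) (hy : (N : ℝ) ^ 2 ≤ |y|) :
    (3 : ℝ) ^ (-r) * √|y| ^ (1 - 2 * r) ≤ invDistPowSum (lam N y) r := by
  set t := √|y|
  have hN1 : (1 : ℝ) ≤ N := by exact_mod_cast hN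
  have ht_sq : t ^ 2 = |y| := Real.sq_sqrt (abs_nonneg y)
  have ht0 : 0 < t := by linarith [Real.le_sqrt_of_sq_le hy]
  have hy0 : 0 < |y| := by nlinarith
  have hnorm : ∀ k ∈ range (⌊t⌋₊ + 1), ‖lam N y - (k : ℂ) ^ 2‖ ≤ 3 * |y| := by
    intro k hk
    have hkt : (k : ℝ) ≤ t := (Nat.le_floor_iff ht0.le).1 (Nat.lt_succ_iff.1 (mem_range.1 hk))
    have hk2 : (k : ℝ) ^ 2 ≤ |y| := ht_sq ▸ pow_le_pow_left₀ (Nat.cast_nonneg k) hkt 2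
    have hre : |(N : ℝ) ^ 2 + N - (k : ℝ) ^ 2| ≤ 2 * |y| :=
      abs_le.2 ⟨by nlinarith [Nat.cast_nonneg (α := ℝ) k], by nlinarith⟩
    linarith [norm_lam_sub_sq_le N k y]
  have h := card_mul_rpow_neg_le_invDistPowSum (z := lam N y) (r := r) (D := 3 * |y|)
    (by linarith) (range (⌊t⌋₊ + 1))
    (fun k _ => (by linarith : (0 : ℝ) < N).trans_le (natCast_le_norm_lam_sub_sq N k y)) hnorm
  rw [card_range, Real.mul_rpow (by norm_num) hy0.le] at h
  calc (3 : ℝ) ^ (-r) * t ^ (1 - 2 * r) = t * ((3 : ℝ) ^ (-r) * |y| ^ (-r)) := by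
        rw [rpow_neg_eq_sqrt_rpow hy0.le, sub_eq_add_neg, Real.rpow_add ht0, Real.rpow_one]
        ring
    _ ≤ (⌊t⌋₊ + 1 : ℕ) * ((3 : ℝ) ^ (-r) * |y| ^ (-r)) := by
        gcongr
        push_cast
        exact (Nat.lt_floor_add_one t).le
    _ ≤ invDistPowSum (lam N y) r := h

theorem invDistPowSum_lam_le_of_sq_le_abs (hr : 1 < r) (hN : 1 ≤ N) (hy : (N : ℝ) ^ 2 ≤ |y|) :
    invDistPowSum (lam N y) r ≤ (3 + 2 ^ r / (2 * r - 1)) * √|y| ^ (1 - 2 * r) := by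
  set t := √|y|
  have hN1 : (1 : ℝ) ≤ N := by exact_mod_cast hN
  have hNt : (N : ℝ) ≤ t := Real.le_sqrt_of_sq_le hy
  have ht1 : 1 ≤ t := hN1.trans hNt
  have hy0 : 0 < |y| := by nlinarith [Real.sq_sqrt (abs_nonneg y)]
  set Q := 2 * ⌊t⌋₊
  have hQ_ge : t ≤ Q := by
    have := Nat.div_two_lt_floor ht1
    push_cast [Q]
    linarith
  have hQ_le : (Q : ℝ) ≤ 2 * t := by
    push_cast [Q]
    linarith [Nat.floor_le (by linarith : 0 ≤ t)]
  have hNQ : 2 * N ≤ Q := Nat.mul_le_mul_left 2 (Nat.le_floor hNt)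
  have hQ0 : (0 : ℝ) < Q := by linarith
  have htail (j : ℕ) : ‖lam N y - ((j + (Q + 1) : ℕ) : ℂ) ^ 2‖ ^ (-r) ≤
      2 ^ r * ((j : ℝ) + Q + 1) ^ (-(2 * r)) := by
    have hk : (2 * N : ℝ) ≤ ((j + (Q + 1) : ℕ) : ℝ) := by
      exact_mod_cast (by omega : 2 * N ≤ j + (Q + 1))
    refine (norm_sub_sq_rpow_neg_le (z := lam N y) (k := j + (Q + 1)) (r := r) (by linarith)
      (by omega) (by rw [lam_re, abs_of_nonneg (by positivity)]; nlinarith)).trans_eq ?_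
    push_cast
    ring_nf
  calc invDistPowSum (lam N y) r
      ≤ (Q + 1 : ℕ) * |y| ^ (-r) + ∑' j : ℕ, 2 ^ r * ((j : ℝ) + Q + 1) ^ (-(2 * r)) :=
        tsum_le_of_head_le_of_tail_le (Q + 1) (fun _ => by positivity)
          (fun k _ => Real.rpow_le_rpow_of_nonpos hy0 (abs_le_norm_lam_sub_sq N k y) (by linarith))
          htail ((summable_natCast_add_add_one_rpow_neg (s := 2 * r) (by linarith) hQ0).mul_left _)
    _ ≤ (3 * t) * t ^ (-(2 * r)) + 2 ^ r * (t ^ (1 - 2 * r) / (2 * r - 1)) := by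
        rw [tsum_mul_left, rpow_neg_eq_sqrt_rpow hy0.le]
        gcongr
        · push_cast
          linarith
        · refine (tsum_natCast_add_add_one_rpow_neg_le (s := 2 * r) (by linarith) hQ0).trans ?_
          exact div_le_div_of_nonneg_right
            (Real.rpow_le_rpow_of_nonpos (by linarith) hQ_ge (by linarith)) (by linarith)
    _ = (3 + 2 ^ r / (2 * r - 1)) * t ^ (1 - 2 * r) := by
        rw [sub_eq_add_neg 1, Real.rpow_add (by linarith), Real.rpow_one]
        ring

end Regimes

section Constants

variable {r : ℝ}

theorem exists_A_lam_bounds_of_abs_le (hr : 1 < r) :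
    ∃ c C : ℝ, 0 < c ∧ 0 < C ∧ ∀ N : ℕ, 1 ≤ N → ∀ y : ℝ, |y| ≤ N →
      c * (N : ℝ)⁻¹ ≤ A (lam N y) r ∧ A (lam N y) r ≤ C * (N : ℝ)⁻¹ := by
  refine ⟨(2 ^ (-r)) ^ (1 / r), (2 * (1 + 1 / (r - 1))) ^ (1 / r), by positivity, by positivity,
    fun N hN y hy => A_bounds_of_invDistPowSum_bounds (by linarith) (by positivity) (by positivity)
      (by positivity) ?_
      ⟨le_invDistPowSum_lam_of_abs_le hr hN hy, invDistPowSum_lam_le_natCast_rpow_neg hr hN y⟩⟩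
  rw [Real.inv_rpow (Nat.cast_nonneg _), Real.rpow_neg (Nat.cast_nonneg _)]

theorem exists_A_lam_bounds_of_le_abs_of_abs_le_sq (hr : 1 < r) :
    ∃ c C : ℝ, 0 < c ∧ 0 < C ∧ ∀ N : ℕ, 1 ≤ N → ∀ y : ℝ, (N : ℝ) ≤ |y| → |y| ≤ (N : ℝ) ^ 2 →
      c * ((N : ℝ) ^ (-(1 / r)) * |y| ^ (-1 + 1 / r)) ≤ A (lam N y) r ∧
        A (lam N y) r ≤ C * ((N : ℝ) ^ (-(1 / r)) * |y| ^ (-1 + 1 / r)) := by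
  refine ⟨((4 : ℝ) ^ (-r) / 2) ^ (1 / r), (2 * (1 + 2 ^ (r - 1) / (r - 1))) ^ (1 / r),
    by positivity, by positivity, fun N hN y h₁ h₂ => A_bounds_of_invDistPowSum_bounds
      (by linarith) (by positivity) (by positivity) (by positivity) ?_
      ⟨le_invDistPowSum_lam_of_le_abs_of_abs_le_sq hr hN h₁ h₂,
        invDistPowSum_lam_le_of_le_abs hr hN h₁⟩⟩
  rw [Real.mul_rpow (by positivity) (by positivity), ← Real.rpow_mul (Nat.cast_nonneg _),
    ← Real.rpow_mul (abs_nonneg y), ← Real.rpow_neg_one]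
  congr 2
  · field_simp
  · field_simp
    ring

theorem exists_A_lam_bounds_of_sq_le_abs (hr : 1 < r) :
    ∃ c C : ℝ, 0 < c ∧ 0 < C ∧ ∀ N : ℕ, 1 ≤ N → ∀ y : ℝ, (N : ℝ) ^ 2 ≤ |y| →
      c * |y| ^ (-1 + 1 / (2 * r)) ≤ A (lam N y) r ∧
        A (lam N y) r ≤ C * |y| ^ (-1 + 1 / (2 * r)) := by
  have hr1 : 0 < 2 * r - 1 := by linarith
  refine ⟨((3 : ℝ) ^ (-r)) ^ (1 / r), (3 + 2 ^ r / (2 * r - 1)) ^ (1 / r),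
    by positivity, by positivity, fun N hN y hy => A_bounds_of_invDistPowSum_bounds
      (by linarith) (by positivity) (by positivity) (by positivity) ?_
      ⟨le_invDistPowSum_lam_of_sq_le_abs hr hN hy, invDistPowSum_lam_le_of_sq_le_abs hr hN hy⟩⟩
  rw [Real.sqrt_eq_rpow, ← Real.rpow_mul (abs_nonneg y), ← Real.rpow_mul (abs_nonneg y)]
  congr 1
  field_simp
  ring

end Constants

theorem mul_le_and_le_mul_of_le {a c c' C C' X : ℝ} (hX : 0 ≤ X) (hc : c ≤ c') (hC : C' ≤ C)
    (h : c' * X ≤ a ∧ a ≤ C' * X) : c * X ≤ a ∧ a ≤ C * X :=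
  ⟨(mul_le_mul_of_nonneg_right hc hX).trans h.1, h.2.trans (mul_le_mul_of_nonneg_right hC hX)⟩

theorem stmt4 (r : ℝ) (hr : 1 < r) :
    ∃ c C : ℝ, 0 < c ∧ 0 < C ∧ ∀ N : ℕ, 2 ≤ N → ∀ y : ℝ,
      (|y| ≤ (N : ℝ) →
        c / N ≤ A (lam N y) r ∧ A (lam N y) r ≤ C / N) ∧
      ((N : ℝ) ≤ |y| ∧ |y| ≤ (N : ℝ) ^ 2 →
        c * (N : ℝ) ^ (-(1 / r)) * |y| ^ (-1 + 1 / r) ≤ A (lam N y) r ∧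
        A (lam N y) r ≤ C * (N : ℝ) ^ (-(1 / r)) * |y| ^ (-1 + 1 / r)) ∧
      ((N : ℝ) ^ 2 ≤ |y| →
        c * |y| ^ (-1 + 1 / (2 * r)) ≤ A (lam N y) r ∧
        A (lam N y) r ≤ C * |y| ^ (-1 + 1 / (2 * r))) := by
  obtain ⟨c₁, C₁, hc₁, hC₁, h₁⟩ := exists_A_lam_bounds_of_abs_le hr
  obtain ⟨c₂, C₂, hc₂, hC₂, h₂⟩ := exists_A_lam_bounds_of_le_abs_of_abs_le_sq hr
  obtain ⟨c₃, C₃, hc₃, hC₃, h₃⟩ := exists_A_lam_bounds_of_sq_le_abs hr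
  refine ⟨min c₁ (min c₂ c₃), max C₁ (max C₂ C₃), by positivity, by positivity,
    fun N hN y => ⟨fun hy => ?_, fun hy => ?_, fun hy => ?_⟩⟩
  · simp only [div_eq_mul_inv]
    exact mul_le_and_le_mul_of_le (by positivity) (min_le_left _ _) (le_max_left _ _)
      (h₁ N (by omega) y hy)
  · simp only [mul_assoc]
    exact mul_le_and_le_mul_of_le (by positivity) ((min_le_right _ _).trans (min_le_left _ _))
      ((le_max_left _ _).trans (le_max_right _ _)) (h₂ N (by omega) y hy.1 hy.2)
  · exact mul_le_and_le_mul_of_le (by positivity) ((min_le_right _ _).trans (min_le_right _ _))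
      ((le_max_right _ _).trans (le_max_right _ _)) (h₃ N (by omega) y hy)
end

section
/- For every a with 1 ≤ a ≤ 2 there exists a constant C = C(a) > 0 such that for every square-summable sequence q = (q(k))_{k ∈ ℤ} of complex numbers and every integer N ≥ 2: σ₁(a, N) ≤ C · ( N^{−a/2} · ∑_{k=0}^{N} E_{N+1−k}(q)^a + E_N(q)^a · N^{1 − a/2} ) when 1 ≤ a < 2, and σ₁(2, N) ≤ C · ( N^{−1} · ∑_{k=0}^{N} E_{N+1−k}(q)² + E_N(q)² · log N ) when a = 2. -/
/-- The tail `E_M(q) = (∑_{|k| ≥ M} |q(k)|²)^{1/2}`. -/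
noncomputable def tailE (q : ℤ → ℂ) (M : ℝ) : ℝ :=
  Real.sqrt (∑' k : ℤ, if M ≤ |(k : ℝ)| then ‖q k‖ ^ 2 else 0)

/-- `σ₁(a,N) = ∑_{|k| ≤ N} ( ∑_{|j| > N} |q(j−k)|/|j+k| )^a`. -/
noncomputable def sigma1 (q : ℤ → ℂ) (a : ℝ) (N : ℕ) : ℝ :=
  ∑ k ∈ Finset.Icc (-(N : ℤ)) (N : ℤ),
    (∑' j : ℤ, if (N : ℤ) < |j| then ‖q (j - k)‖ / |(j : ℝ) + (k : ℝ)| else 0) ^ a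

/-- `σ₂(a,N) = ∑_{|k| > N} ( ∑_{|j| ≤ N} |q(j−k)|/|j+k| )^a`. -/
noncomputable def sigma2 (q : ℤ → ℂ) (a : ℝ) (N : ℕ) : ℝ :=
  ∑' k : ℤ,
    if (N : ℤ) < |k| then
      (∑ j ∈ Finset.Icc (-(N : ℤ)) (N : ℤ),
        ‖q (j - k)‖ / |(j : ℝ) + (k : ℝ)|) ^ a
    else 0

/-!
Split the inner sum over `|j| > N` into the parts `j > N` and `j < -N`; the reflection
`q ↦ q(-·)` carries the second part to the first. On `j > N`, Cauchy–Schwarz bounds the sum by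
`E_{N+1-k}(q) · (∑_{m > N+k} m⁻²)^{1/2} ≤ E_{N+1-k}(q) · (2 / (N+1+k))^{1/2}`. Raising this to
the power `a` and summing over `k`, the terms with `k ≥ 0` give `N^{-a/2} ∑_k E_{N+1-k}^a`,
while for `k < 0` we use `E_{N+1-k} ≤ E_N` and are left with `E_N^a ∑_{i ≤ N} i^{-a/2}`,
which is `O(N^{1-a/2})` for `a < 2` and `O(log N)` for `a = 2`.
-/

open Finset Real

lemma summable_and_tsum_mul_le_sqrt_mul_sqrt {ι : Type*} {f g : ι → ℝ}
    (hf : ∀ i, 0 ≤ f i) (hg : ∀ i, 0 ≤ g i)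
    (hf2 : Summable fun i => f i ^ 2) (hg2 : Summable fun i => g i ^ 2) :
    (Summable fun i => f i * g i) ∧
      ∑' i, f i * g i ≤ √(∑' i, f i ^ 2) * √(∑' i, g i ^ 2) := by
  simp_rw [← Real.rpow_two] at hf2 hg2 ⊢
  simpa only [Real.sqrt_eq_rpow] using
    Real.summable_and_inner_le_Lp_mul_Lq_tsum_of_nonneg .two_two hf hg hf2 hg2

lemma summable_and_tsum_inv_sq_le {c : ℤ} (hc : 0 ≤ c) :
    (Summable fun m : ℤ => if c < m then ((m : ℝ) ^ 2)⁻¹ else 0) ∧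
      ∑' m : ℤ, (if c < m then ((m : ℝ) ^ 2)⁻¹ else 0) ≤ 2 / (c + 1) := by
  lift c to ℕ using hc
  set F : ℤ → ℝ := fun m => if (c : ℤ) < m then ((m : ℝ) ^ 2)⁻¹ else 0
  set f : ℕ → ℝ := fun n => if c < n then ((n : ℝ) ^ 2)⁻¹ else 0 with hf
  have hf0 : ∀ n, 0 ≤ f n := fun n => by positivity
  have hpartial : ∀ M, ∑ n ∈ range M, f n ≤ 2 / (c + 1) := fun M => by
    have : (range M).filter (c < ·) = Ioo c M := by ext; simp; omega
    rw [hf, ← sum_filter, this]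
    exact sum_Ioo_inv_sq_le c M
  have hnat : (fun n : ℕ => F n) = f := by ext n; simp [F, f]
  have hneg : (fun n : ℕ => F (-(n + 1))) = fun _ => 0 := by ext n; exact if_neg (by omega)
  have hsum_nat : Summable fun n : ℕ => F n := hnat ▸ summable_of_sum_range_le hf0 hpartial
  have hsum_neg : Summable fun n : ℕ => F (-(n + 1)) := hneg ▸ summable_zero
  refine ⟨.of_nat_of_neg_add_one hsum_nat hsum_neg, ?_⟩
  rw [tsum_of_nat_of_neg_add_one hsum_nat hsum_neg, hnat, hneg, tsum_zero, add_zero,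
    Int.cast_natCast]
  exact Real.tsum_le_of_sum_range_le hf0 hpartial

lemma sum_Icc_neg_eq_sum_range_add_sum_range {M : Type*} [AddCommMonoid M] (N : ℕ) (F : ℤ → M) :
    ∑ k ∈ Icc (-(N : ℤ)) N, F k = ∑ i ∈ range N, F (i - N) + ∑ i ∈ range (N + 1), F i := by
  have : ∑ k ∈ Icc (-(N : ℤ)) N, F k = ∑ i ∈ range (N + (N + 1)), F (i - N) := by
    refine (sum_nbij' (fun i : ℕ => (i : ℤ) - N) (fun k => (k + N).toNat) ?_ ?_ ?_ ?_ ?_).symm <;>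
      intros <;> simp_all <;> omega
  rw [this, sum_range_add]
  simp

lemma sum_Icc_neg_comp_neg {M : Type*} [AddCommMonoid M] (N : ℕ) (F : ℤ → M) :
    ∑ k ∈ Icc (-(N : ℤ)) N, F (-k) = ∑ k ∈ Icc (-(N : ℤ)) N, F k :=
  sum_nbij' Neg.neg Neg.neg (by intros; simp_all; omega) (by intros; simp_all; omega)
    (by simp) (by simp) (by simp)

lemma rpow_add_le_two_mul_add_rpow {x y a : ℝ} (hx : 0 ≤ x) (hy : 0 ≤ y) (ha1 : 1 ≤ a)
    (ha2 : a ≤ 2) : (x + y) ^ a ≤ 2 * (x ^ a + y ^ a) := by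
  lift x to NNReal using hx
  lift y to NNReal using hy
  have h2 : (2 : NNReal) ^ (a - 1) ≤ 2 := by
    simpa using NNReal.rpow_le_rpow_of_exponent_le one_le_two (by linarith : a - 1 ≤ 1)
  exact_mod_cast (NNReal.rpow_add_le_mul_rpow_add_rpow x y ha1).trans (mul_le_mul_left h2 _)

lemma sum_range_add_one_rpow_neg_le {s : ℝ} (hs0 : 0 ≤ s) (hs1 : s < 1) (N : ℕ) :
    ∑ i ∈ range N, ((i : ℝ) + 1) ^ (-s) ≤ (N : ℝ) ^ (1 - s) / (1 - s) := by
  have hint : ∀ i : ℕ, IntervalIntegrable (fun x : ℝ => x ^ (-s)) MeasureTheory.volume i (i + 1) :=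
    fun _ => intervalIntegral.intervalIntegrable_rpow' (by linarith)
  calc ∑ i ∈ range N, ((i : ℝ) + 1) ^ (-s)
      ≤ ∑ i ∈ range N, ∫ x in (i : ℝ)..(i + 1 : ℕ), x ^ (-s) := by
        refine sum_le_sum fun i _ => ?_
        calc ((i : ℝ) + 1) ^ (-s) = ∫ _ in (i : ℝ)..(i + 1 : ℕ), ((i : ℝ) + 1) ^ (-s) := by simp
          _ ≤ ∫ x in (i : ℝ)..(i + 1 : ℕ), x ^ (-s) := by
            refine intervalIntegral.integral_mono_on_of_le_Ioo (by simp) (by simp)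
              (by exact_mod_cast hint i) fun x hx => ?_
            have hx0 : 0 < x := lt_of_le_of_lt i.cast_nonneg hx.1
            exact Real.rpow_le_rpow_of_nonpos hx0 (by exact_mod_cast hx.2.le) (by linarith)
    _ = ∫ x in (0 : ℝ)..N, x ^ (-s) := by
        rw [intervalIntegral.sum_integral_adjacent_intervals fun i _ => by exact_mod_cast hint i]
        simp
    _ = (N : ℝ) ^ (1 - s) / (1 - s) := by
        rw [integral_rpow (Or.inl (by linarith)), neg_add_eq_sub,
          Real.zero_rpow (by linarith), sub_zero]

lemma sum_range_add_one_inv_le_three_mul_log {N : ℕ} (hN : 2 ≤ N) :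
    ∑ i ∈ range N, ((i : ℝ) + 1)⁻¹ ≤ 3 * log N := by
  have h2 : log 2 ≤ log N := log_le_log two_pos (by exact_mod_cast hN)
  have := harmonic_le_one_add_log N
  simp only [harmonic, Rat.cast_sum, Rat.cast_inv, Rat.cast_natCast] at this
  push_cast at this
  linarith [Real.log_two_gt_d9]

section Tails

variable {q : ℤ → ℂ}

lemma tailE_nonneg (q : ℤ → ℂ) (M : ℝ) : 0 ≤ tailE q M := Real.sqrt_nonneg _

lemma sq_tailE (q : ℤ → ℂ) (M : ℝ) :
    tailE q M ^ 2 = ∑' k : ℤ, if M ≤ |(k : ℝ)| then ‖q k‖ ^ 2 else 0 :=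
  Real.sq_sqrt (tsum_nonneg fun _ => by positivity)

lemma summable_tail_sq (hq : Summable fun k => ‖q k‖ ^ 2) (M : ℝ) :
    Summable fun k : ℤ => if M ≤ |(k : ℝ)| then ‖q k‖ ^ 2 else 0 :=
  hq.of_nonneg_of_le (fun _ => by positivity) fun _ => by split_ifs <;> [rfl; positivity]

lemma tailE_antitone (hq : Summable fun k => ‖q k‖ ^ 2) : Antitone (tailE q) := by
  intro M M' h
  refine Real.sqrt_le_sqrt <| (summable_tail_sq hq M').tsum_le_tsum (fun k => ?_)
    (summable_tail_sq hq M)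
  split_ifs with h' h'' <;> first | rfl | positivity | exact absurd (h.trans h') h''

lemma tailE_comp_neg (q : ℤ → ℂ) : tailE (fun m => q (-m)) = tailE q := by
  ext M
  simp only [tailE]
  rw [← (Equiv.neg ℤ).tsum_eq]
  simp

lemma summable_shift_sq (hq : Summable fun k => ‖q k‖ ^ 2) (N : ℕ) (k : ℤ) :
    Summable fun j : ℤ => (if (N : ℤ) < j then ‖q (j - k)‖ else 0) ^ 2 := by
  refine ((Equiv.subRight k).summable_iff.mpr hq).of_nonneg_of_le (fun _ => by positivity)
    fun j => ?_
  split_ifs <;> simp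

lemma tsum_shift_sq_le_sq_tailE (hq : Summable fun k => ‖q k‖ ^ 2) (N : ℕ) (k : ℤ) :
    ∑' j : ℤ, (if (N : ℤ) < j then ‖q (j - k)‖ else 0) ^ 2 ≤ tailE q (N + 1 - k) ^ 2 := by
  rw [sq_tailE, ← (Equiv.addRight k).tsum_eq
    fun j : ℤ => (if (N : ℤ) < j then ‖q (j - k)‖ else 0) ^ 2]
  refine Summable.tsum_le_tsum (fun m => ?_) ?_ (summable_tail_sq hq _)
  · simp only [Equiv.coe_addRight, add_sub_cancel_right]
    split_ifs with h h'
    · rfl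
    · refine absurd ?_ h'
      have : ((N : ℤ) : ℝ) + 1 - k ≤ m := by exact_mod_cast (by omega : (N : ℤ) + 1 - k ≤ m)
      push_cast at this
      exact this.trans (le_abs_self _)
    · simp
    · simp
  · exact (Equiv.addRight k).summable_iff
      (f := fun j : ℤ => (if (N : ℤ) < j then ‖q (j - k)‖ else 0) ^ 2) |>.mpr
      (summable_shift_sq hq N k)

end Tails

noncomputable def tailSum (q : ℤ → ℂ) (N : ℕ) (k : ℤ) : ℝ :=
  ∑' j : ℤ, if (N : ℤ) < j then ‖q (j - k)‖ / |(j : ℝ) + k| else 0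

section TailSum

variable {q : ℤ → ℂ} {N : ℕ} {k : ℤ}

lemma summable_and_tsum_shift_inv_sq_le (hk : -(N : ℤ) ≤ k) :
    (Summable fun j : ℤ => (if (N : ℤ) < j then |(j : ℝ) + k|⁻¹ else 0) ^ 2) ∧
      ∑' j : ℤ, (if (N : ℤ) < j then |(j : ℝ) + k|⁻¹ else 0) ^ 2 ≤ 2 / (N + 1 + k) := by
  set F : ℤ → ℝ := fun m => if (N : ℤ) + k < m then ((m : ℝ) ^ 2)⁻¹ else 0
  have hshift : (fun j : ℤ => (if (N : ℤ) < j then |(j : ℝ) + k|⁻¹ else 0) ^ 2) =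
      F ∘ Equiv.addRight k := by
    ext j
    simp only [F, Function.comp_apply, Equiv.coe_addRight, add_lt_add_iff_right]
    split_ifs <;> simp [inv_pow]
  obtain ⟨hsum, hle⟩ := summable_and_tsum_inv_sq_le (c := N + k) (by omega)
  refine ⟨hshift ▸ (Equiv.addRight k).summable_iff.mpr hsum, ?_⟩
  rw [hshift, Function.comp_def, (Equiv.addRight k).tsum_eq F]
  convert hle using 2
  push_cast
  ring

lemma summable_and_tailSum_le (hq : Summable fun k => ‖q k‖ ^ 2) (hk : -(N : ℤ) ≤ k) :
    (Summable fun j : ℤ => if (N : ℤ) < j then ‖q (j - k)‖ / |(j : ℝ) + k| else 0) ∧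
      tailSum q N k ≤ tailE q (N + 1 - k) * √(2 / (N + 1 + k)) := by
  set f : ℤ → ℝ := fun j => if (N : ℤ) < j then ‖q (j - k)‖ else 0
  set g : ℤ → ℝ := fun j => if (N : ℤ) < j then |(j : ℝ) + k|⁻¹ else 0
  have hfg : (fun j : ℤ => if (N : ℤ) < j then ‖q (j - k)‖ / |(j : ℝ) + k| else 0) =
      fun j => f j * g j := by
    ext j
    simp only [f, g]
    split_ifs <;> simp [div_eq_mul_inv]
  obtain ⟨hg_sum, hg_le⟩ := summable_and_tsum_shift_inv_sq_le hk
  obtain ⟨hsum, hle⟩ := summable_and_tsum_mul_le_sqrt_mul_sqrt (f := f) (g := g)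
    (fun _ => by positivity) (fun _ => by positivity) (summable_shift_sq hq N k) hg_sum
  refine ⟨hfg ▸ hsum, ?_⟩
  calc tailSum q N k = ∑' j, f j * g j := by rw [tailSum, hfg]
    _ ≤ √(∑' j, f j ^ 2) * √(∑' j, g j ^ 2) := hle
    _ ≤ √(tailE q (N + 1 - k) ^ 2) * √(2 / (N + 1 + k)) := by
      gcongr
      exact tsum_shift_sq_le_sq_tailE hq N k
    _ = tailE q (N + 1 - k) * √(2 / (N + 1 + k)) := by rw [Real.sqrt_sq (tailE_nonneg q _)]

lemma tailSum_rpow_le (hq : Summable fun k => ‖q k‖ ^ 2) {a : ℝ} (ha0 : 0 ≤ a) (ha2 : a ≤ 2)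
    (hk : -(N : ℤ) ≤ k) :
    tailSum q N k ^ a ≤ 2 * tailE q (N + 1 - k) ^ a * ((N : ℝ) + 1 + k) ^ (-(a / 2)) := by
  have hm : (0 : ℝ) < N + 1 + k := by exact_mod_cast (by omega : (0 : ℤ) < N + 1 + k)
  have h2 : (2 : ℝ) ^ (a / 2) ≤ 2 := by
    simpa using Real.rpow_le_rpow_of_exponent_le one_le_two (by linarith : a / 2 ≤ 1)
  calc tailSum q N k ^ a ≤ (tailE q (N + 1 - k) * √(2 / (N + 1 + k))) ^ a :=
        Real.rpow_le_rpow (tsum_nonneg fun _ => by positivity)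
          (summable_and_tailSum_le hq hk).2 ha0
    _ = tailE q (N + 1 - k) ^ a * 2 ^ (a / 2) * ((N : ℝ) + 1 + k) ^ (-(a / 2)) := by
      rw [Real.mul_rpow (tailE_nonneg q _) (by positivity), Real.sqrt_eq_rpow,
        ← Real.rpow_mul (by positivity), Real.div_rpow zero_le_two hm.le, Real.rpow_neg hm.le]
      ring_nf
    _ ≤ 2 * tailE q (N + 1 - k) ^ a * ((N : ℝ) + 1 + k) ^ (-(a / 2)) := by
      rw [mul_comm 2]
      gcongr
      exact Real.rpow_nonneg (tailE_nonneg q _) a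

end TailSum

section Sigma1

variable {q : ℤ → ℂ} {N : ℕ}

lemma tailSum_nonneg (q : ℤ → ℂ) (N : ℕ) (k : ℤ) : 0 ≤ tailSum q N k :=
  tsum_nonneg fun _ => by positivity

lemma sum_tailSum_rpow_le (hq : Summable fun k => ‖q k‖ ^ 2) {a : ℝ} (ha0 : 0 ≤ a)
    (ha2 : a ≤ 2) (hN : 0 < N) :
    ∑ k ∈ Icc (-(N : ℤ)) N, tailSum q N k ^ a ≤
      2 * ((N : ℝ) ^ (-(a / 2)) * ∑ i ∈ range (N + 1), tailE q (N + 1 - i) ^ a +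
        tailE q N ^ a * ∑ i ∈ range N, ((i : ℝ) + 1) ^ (-(a / 2))) := by
  have hE : ∀ M, 0 ≤ tailE q M ^ a := fun M => Real.rpow_nonneg (tailE_nonneg q M) a
  calc ∑ k ∈ Icc (-(N : ℤ)) N, tailSum q N k ^ a
      ≤ ∑ k ∈ Icc (-(N : ℤ)) N, 2 * tailE q (N + 1 - k) ^ a * ((N : ℝ) + 1 + k) ^ (-(a / 2)) :=
        sum_le_sum fun k hk => tailSum_rpow_le hq ha0 ha2 (mem_Icc.1 hk).1
    _ = ∑ i ∈ range N, 2 * tailE q (N + 1 - (i - N)) ^ a * ((i : ℝ) + 1) ^ (-(a / 2)) +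
          ∑ i ∈ range (N + 1), 2 * tailE q (N + 1 - i) ^ a * ((N : ℝ) + 1 + i) ^ (-(a / 2)) := by
      rw [sum_Icc_neg_eq_sum_range_add_sum_range]
      push_cast
      ring_nf
    _ ≤ ∑ i ∈ range N, 2 * tailE q N ^ a * ((i : ℝ) + 1) ^ (-(a / 2)) +
          ∑ i ∈ range (N + 1), 2 * tailE q (N + 1 - i) ^ a * (N : ℝ) ^ (-(a / 2)) := by
      refine add_le_add (sum_le_sum fun i hi => ?_) (sum_le_sum fun i _ => ?_)
      · have hi : (i : ℝ) < N := by exact_mod_cast mem_range.1 hi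
        gcongr
        · exact tailE_nonneg q _
        · exact tailE_antitone hq (by linarith)
      · refine mul_le_mul_of_nonneg_left ?_ (mul_nonneg zero_le_two (hE _))
        exact Real.rpow_le_rpow_of_nonpos (Nat.cast_pos.2 hN) (by linarith) (by linarith)
    _ = _ := by
      simp only [← mul_sum, ← sum_mul]
      ring

lemma tsum_abs_gt_eq_tailSum_add_tailSum (hq : Summable fun k => ‖q k‖ ^ 2) {k : ℤ}
    (hk : |k| ≤ N) :
    ∑' j : ℤ, (if (N : ℤ) < |j| then ‖q (j - k)‖ / |(j : ℝ) + k| else 0) =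
      tailSum q N k + tailSum (fun m => q (-m)) N (-k) := by
  obtain ⟨hk₁, hk₂⟩ := abs_le.1 hk
  set G : ℤ → ℝ := fun j => ‖q (j - k)‖ / |(j : ℝ) + k|
  have hsplit : (fun j : ℤ => if (N : ℤ) < |j| then G j else 0) =
      fun j => (if (N : ℤ) < j then G j else 0) + (if (N : ℤ) < -j then G j else 0) := by
    ext j
    simp only [lt_abs]
    split_ifs <;> first | omega | simp
  have hreflect : (fun j : ℤ => if (N : ℤ) < -j then G j else 0) ∘ Equiv.neg ℤ =
      fun j => if (N : ℤ) < j then ‖q (-(j - -k))‖ / |(j : ℝ) + ((-k : ℤ) : ℝ)| else 0 := by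
    ext j
    simp only [G, Function.comp_apply, Equiv.neg_apply, neg_neg]
    split_ifs
    · push_cast
      rw [← abs_neg]
      ring_nf
    · rfl
  have hneg_sq : Summable fun m => ‖(fun m => q (-m)) m‖ ^ 2 :=
    (Equiv.neg ℤ).summable_iff (f := fun m => ‖q m‖ ^ 2) |>.mpr hq
  have hsum₁ := (summable_and_tailSum_le hq hk₁).1
  have hsum₂ := (summable_and_tailSum_le hneg_sq (by omega : -(N : ℤ) ≤ -k)).1
  rw [← hreflect, (Equiv.neg ℤ).summable_iff] at hsum₂
  change ∑' j, (fun j : ℤ => if (N : ℤ) < |j| then G j else 0) j = _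
  rw [hsplit, hsum₁.tsum_add hsum₂, tailSum, tailSum, ← hreflect, Function.comp_def,
    (Equiv.neg ℤ).tsum_eq (fun j : ℤ => if (N : ℤ) < -j then G j else 0)]

lemma sigma1_le (hq : Summable fun k => ‖q k‖ ^ 2) {a : ℝ} (ha1 : 1 ≤ a) (ha2 : a ≤ 2)
    (hN : 0 < N) :
    sigma1 q a N ≤
      8 * ((N : ℝ) ^ (-(a / 2)) * ∑ i ∈ range (N + 1), tailE q (N + 1 - i) ^ a +
        tailE q N ^ a * ∑ i ∈ range N, ((i : ℝ) + 1) ^ (-(a / 2))) := by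
  set B := (N : ℝ) ^ (-(a / 2)) * ∑ i ∈ range (N + 1), tailE q (N + 1 - i) ^ a +
    tailE q N ^ a * ∑ i ∈ range N, ((i : ℝ) + 1) ^ (-(a / 2))
  set q' : ℤ → ℂ := fun m => q (-m)
  have hq' : Summable fun m => ‖q' m‖ ^ 2 :=
    (Equiv.neg ℤ).summable_iff (f := fun m => ‖q m‖ ^ 2) |>.mpr hq
  have hS : ∑ k ∈ Icc (-(N : ℤ)) N, tailSum q N k ^ a ≤ 2 * B :=
    sum_tailSum_rpow_le hq (by linarith) ha2 hN
  have hS' : ∑ k ∈ Icc (-(N : ℤ)) N, tailSum q' N k ^ a ≤ 2 * B := by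
    simpa only [q', tailE_comp_neg] using sum_tailSum_rpow_le hq' (by linarith) ha2 hN
  calc sigma1 q a N
      = ∑ k ∈ Icc (-(N : ℤ)) N, (tailSum q N k + tailSum q' N (-k)) ^ a :=
        sum_congr rfl fun k hk => by
          rw [tsum_abs_gt_eq_tailSum_add_tailSum hq (abs_le.2 (mem_Icc.1 hk))]
    _ ≤ ∑ k ∈ Icc (-(N : ℤ)) N, 2 * (tailSum q N k ^ a + tailSum q' N (-k) ^ a) :=
        sum_le_sum fun k _ =>
          rpow_add_le_two_mul_add_rpow (tailSum_nonneg _ _ _) (tailSum_nonneg _ _ _) ha1 ha2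
    _ = 2 * (∑ k ∈ Icc (-(N : ℤ)) N, tailSum q N k ^ a +
          ∑ k ∈ Icc (-(N : ℤ)) N, tailSum q' N k ^ a) := by
        rw [← mul_sum, sum_add_distrib, sum_Icc_neg_comp_neg N fun k => tailSum q' N k ^ a]
    _ ≤ 8 * B := by linarith

lemma sigma1_le_of_lt_two (hq : Summable fun k => ‖q k‖ ^ 2) {a : ℝ} (ha1 : 1 ≤ a) (ha2 : a < 2)
    (hN : 0 < N) :
    sigma1 q a N ≤ 8 * (1 + 2 / (2 - a)) *
      ((N : ℝ) ^ (-(a / 2)) * ∑ k ∈ range (N + 1), tailE q ((N : ℝ) + 1 - k) ^ a +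
        tailE q N ^ a * (N : ℝ) ^ (1 - a / 2)) := by
  set X := (N : ℝ) ^ (-(a / 2)) * ∑ k ∈ range (N + 1), tailE q ((N : ℝ) + 1 - k) ^ a
  have hX : 0 ≤ X := mul_nonneg (by positivity)
    (sum_nonneg fun _ _ => Real.rpow_nonneg (tailE_nonneg q _) a)
  have hE : 0 ≤ tailE q N ^ a := Real.rpow_nonneg (tailE_nonneg q _) a
  have hY : 0 ≤ tailE q N ^ a * (N : ℝ) ^ (1 - a / 2) := mul_nonneg hE (by positivity)
  have hc : 0 ≤ 2 / (2 - a) := div_nonneg zero_le_two (by linarith)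
  have hpow : ∑ i ∈ range N, ((i : ℝ) + 1) ^ (-(a / 2)) ≤ 2 / (2 - a) * (N : ℝ) ^ (1 - a / 2) := by
    convert sum_range_add_one_rpow_neg_le (s := a / 2) (by linarith) (by linarith) N using 1
    field_simp
  calc sigma1 q a N
      ≤ 8 * (X + tailE q N ^ a * ∑ i ∈ range N, ((i : ℝ) + 1) ^ (-(a / 2))) :=
        sigma1_le hq ha1 ha2.le hN
    _ ≤ 8 * (X + 2 / (2 - a) * (tailE q N ^ a * (N : ℝ) ^ (1 - a / 2))) := by
        nlinarith [mul_le_mul_of_nonneg_left hpow hE]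
    _ ≤ 8 * (1 + 2 / (2 - a)) * (X + tailE q N ^ a * (N : ℝ) ^ (1 - a / 2)) := by
        nlinarith [mul_nonneg hc hX]

lemma sigma1_two_le (hq : Summable fun k => ‖q k‖ ^ 2) (hN : 2 ≤ N) :
    sigma1 q 2 N ≤ 24 *
      ((N : ℝ)⁻¹ * ∑ k ∈ range (N + 1), tailE q ((N : ℝ) + 1 - k) ^ 2 +
        tailE q N ^ 2 * log N) := by
  have h := sigma1_le hq one_le_two le_rfl (by omega : 0 < N)
  simp only [show -((2 : ℝ) / 2) = -1 by norm_num, Real.rpow_neg_one, Real.rpow_two] at h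
  have hlog := mul_le_mul_of_nonneg_left (sum_range_add_one_inv_le_three_mul_log hN)
    (sq_nonneg (tailE q N))
  have hX : 0 ≤ (N : ℝ)⁻¹ * ∑ k ∈ range (N + 1), tailE q ((N : ℝ) + 1 - k) ^ 2 := by positivity
  linarith

end Sigma1

theorem stmt14 (a : ℝ) (ha1 : 1 ≤ a) (ha2 : a ≤ 2) :
    ∃ C : ℝ, 0 < C ∧ ∀ q : ℤ → ℂ, Summable (fun k : ℤ => ‖q k‖ ^ 2) →
      ∀ N : ℕ, 2 ≤ N →
        (a < 2 → sigma1 q a N ≤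
          C * ((N : ℝ) ^ (-(a / 2)) *
              ∑ k ∈ Finset.range (N + 1), tailE q ((N : ℝ) + 1 - k) ^ a +
            tailE q N ^ a * (N : ℝ) ^ (1 - a / 2))) ∧
        (a = 2 → sigma1 q 2 N ≤
          C * ((N : ℝ)⁻¹ *
              ∑ k ∈ Finset.range (N + 1), tailE q ((N : ℝ) + 1 - k) ^ (2 : ℕ) +
            tailE q N ^ (2 : ℕ) * Real.log N)) := by
  rcases ha2.lt_or_eq with ha2 | rfl
  · have hc : 0 < 2 - a := by linarith
    exact ⟨8 * (1 + 2 / (2 - a)), by positivity, fun q hq N hN =>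
      ⟨fun _ => sigma1_le_of_lt_two hq ha1 ha2 (by omega), fun h => absurd h ha2.ne⟩⟩
  · exact ⟨24, by norm_num, fun q hq N hN =>
      ⟨fun h => absurd h (lt_irrefl 2), fun _ => sigma1_two_le hq hN⟩⟩
end
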